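/- Let K ⊆ ℝ^n be a nonempty closed set and d ≥ 1. The set R_K of all polynomials g of degree exactly d such that Sol(K∞, g_d) is bounded is open in the space P_d of polynomials of degree at most d. -/

import Mathlib

open Filter Topology MvPolynomial Bornology
open scoped RealInnerProductSpace Pointwise

noncomputable section

/-- `ℝ^n` as Euclidean space. -/
abbrev En (n : ℕ) := EuclideanSpace ℝ (Fin n)

/-- Evaluation of a multivariate polynomial at a point of `ℝ^n`. -/
def evalP {n : ℕ} (f : MvPolynomial (Fin n) ℝ) (x : En n) : ℝ :=
  MvPolynomial.eval (fun i => x i) f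

/-- `Sol(C,g)`: the set of global minimizers of `g` on `C`. -/
def solSet {n : ℕ} (C : Set (En n)) (g : En n → ℝ) : Set (En n) :=
  {x ∈ C | ∀ y ∈ C, g x ≤ g y}

/-- `K∞`: the asymptotic cone of `K`. -/
def asympCone {n : ℕ} (K : Set (En n)) : Set (En n) :=
  {v | ∃ (t : ℕ → ℝ) (x : ℕ → En n), (∀ k, x k ∈ K) ∧
    Tendsto t atTop atTop ∧ Tendsto (fun k => (t k)⁻¹ • x k) atTop (𝓝 v)}

/-- The gradient `∇f` of a polynomial, via its partial derivatives. -/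
def polyGrad {n : ℕ} (f : MvPolynomial (Fin n) ℝ) (x : En n) : En n :=
  WithLp.toLp 2 (fun i => MvPolynomial.eval (fun j => x j) (MvPolynomial.pderiv i f))

/-- The `ℓ2`-norm of the coefficient vector of a polynomial. -/
def l2Norm {n : ℕ} (p : MvPolynomial (Fin n) ℝ) : ℝ :=
  Real.sqrt (∑ m ∈ p.support, (MvPolynomial.coeff m p) ^ 2)

/-- `S` is generic (residual) in `X`: it contains a countable intersection of sets, each of
which is open and dense in `X` (with respect to the `ℓ2` coefficient metric). -/
def IsGenericIn {n : ℕ} (X S : Set (MvPolynomial (Fin n) ℝ)) : Prop :=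
  ∃ D : ℕ → Set (MvPolynomial (Fin n) ℝ),
    (∀ k, D k ⊆ X ∧
      (∀ g ∈ D k, ∃ ε > 0, ∀ g' ∈ X, l2Norm (g' - g) < ε → g' ∈ D k) ∧
      (∀ g ∈ X, ∀ ε > 0, ∃ g' ∈ D k, l2Norm (g' - g) < ε)) ∧
    X ∩ (⋂ k, D k) ⊆ S

/-! For a form `f` of degree `d ≥ 1` on a closed cone `C` with unit section `S = C ∩ 𝕊ⁿ⁻¹`,
`Sol(C, f)` is bounded exactly when `f` is negative somewhere on `S` (then `f` is unbounded below
along a ray and `Sol(C, f) = ∅`) or positive on all of `S` (then `Sol(C, f) ⊆ {0}`); if `f ≥ 0`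
vanishes at a point of `S`, the whole ray through it consists of minimizers. Both alternatives
survive uniformly small perturbations of `f` on the compact set `S`, and the top-degree form of a
polynomial of degree `≤ d` moves by at most `(d + 1)ⁿ ‖g' - g‖` on the unit ball. The degree does
not drop nearby because a coefficient of top degree stays nonzero. -/

theorem MvPolynomial.IsHomogeneous.eval_smul {σ R : Type*} [CommSemiring R]
    {φ : MvPolynomial σ R} {m : ℕ} (hφ : φ.IsHomogeneous m) (c : R) (x : σ → R) :
    eval (c • x) φ = c ^ m * eval x φ := by
  rw [eval_eq, eval_eq, Finset.mul_sum]
  refine Finset.sum_congr rfl fun e he => ?_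
  have hdeg : ∑ i ∈ e.support, e i = m := by
    simpa [Finsupp.weight_apply, Finsupp.sum] using hφ (mem_support_iff.mp he)
  simp only [Pi.smul_apply, smul_eq_mul, mul_pow, Finset.prod_mul_distrib,
    Finset.prod_pow_eq_pow_sum, hdeg]
  ring

lemma continuous_evalP {n : ℕ} (f : MvPolynomial (Fin n) ℝ) : Continuous (evalP f) :=
  (continuous_eval f).comp (PiLp.continuous_ofLp 2 _)

lemma abs_coeff_le_l2Norm {n : ℕ} (p : MvPolynomial (Fin n) ℝ) (m : Fin n →₀ ℕ) :
    |coeff m p| ≤ l2Norm p := by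
  by_cases h : coeff m p = 0
  · simp only [h, abs_zero]
    exact Real.sqrt_nonneg _
  rw [← Real.sqrt_sq_eq_abs]
  exact Real.sqrt_le_sqrt (Finset.single_le_sum (f := fun m => coeff m p ^ 2)
    (fun m _ => sq_nonneg _) (mem_support_iff.mpr h))

lemma l2Norm_homogeneousComponent_le {n : ℕ} (d : ℕ) (p : MvPolynomial (Fin n) ℝ) :
    l2Norm (homogeneousComponent d p) ≤ l2Norm p := by
  refine Real.sqrt_le_sqrt ?_
  calc ∑ m ∈ (homogeneousComponent d p).support, coeff m (homogeneousComponent d p) ^ 2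
      ≤ ∑ m ∈ (homogeneousComponent d p).support, coeff m p ^ 2 := by
        refine Finset.sum_le_sum fun m _ => ?_
        rw [coeff_homogeneousComponent]
        split_ifs <;> simp [sq_nonneg]
    _ ≤ ∑ m ∈ p.support, coeff m p ^ 2 := by
        refine Finset.sum_le_sum_of_subset_of_nonneg (fun m hm => ?_) fun m _ _ => sq_nonneg _
        rw [mem_support_iff, coeff_homogeneousComponent] at hm
        exact mem_support_iff.mpr fun h => hm (by simp [h])

lemma card_support_le_of_totalDegree_le {n d : ℕ} {p : MvPolynomial (Fin n) ℝ}
    (hp : p.totalDegree ≤ d) : p.support.card ≤ (d + 1) ^ n := by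
  have hlt : ∀ m ∈ p.support, ∀ i, m i < d + 1 := fun m hm i =>
    Nat.lt_succ_of_le ((Finsupp.le_degree i m).trans ((le_totalDegree hm).trans hp))
  calc p.support.card ≤ Fintype.card (Fin n → Fin (d + 1)) := by
        refine Finset.card_le_card_of_injOn (fun m i => ⟨m i % (d + 1), Nat.mod_lt _ d.succ_pos⟩)
          (fun _ _ => Finset.mem_coe.mpr (Finset.mem_univ _)) fun m hm m' hm' h => ?_
        ext i
        have := congrArg Fin.val (congrFun h i)
        simpa [Nat.mod_eq_of_lt (hlt m hm i), Nat.mod_eq_of_lt (hlt m' hm' i)] using this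
    _ = (d + 1) ^ n := by simp

lemma abs_evalP_le_of_totalDegree_le {n d : ℕ} {p : MvPolynomial (Fin n) ℝ}
    (hp : p.totalDegree ≤ d) {v : En n} (hv : ‖v‖ ≤ 1) :
    |evalP p v| ≤ ((d + 1) ^ n : ℕ) * l2Norm p := by
  have hmonomial : ∀ m : Fin n →₀ ℕ, |∏ i ∈ m.support, v i ^ m i| ≤ 1 := fun m => by
    rw [Finset.abs_prod]
    refine Finset.prod_le_one (fun _ _ => abs_nonneg _) fun i _ => ?_
    rw [abs_pow]
    exact pow_le_one₀ (abs_nonneg _) ((PiLp.norm_apply_le v i).trans hv)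
  calc |evalP p v| ≤ ∑ m ∈ p.support, |coeff m p * ∏ i ∈ m.support, v i ^ m i| :=
        Finset.abs_sum_le_sum_abs _ _
    _ ≤ ∑ m ∈ p.support, l2Norm p := Finset.sum_le_sum fun m _ => by
        rw [abs_mul]
        exact (mul_le_of_le_one_right (abs_nonneg _) (hmonomial m)).trans
          (abs_coeff_le_l2Norm p m)
    _ = p.support.card * l2Norm p := by rw [Finset.sum_const, nsmul_eq_mul]
    _ ≤ ((d + 1) ^ n : ℕ) * l2Norm p := by
        gcongr
        · exact Real.sqrt_nonneg _
        · exact card_support_le_of_totalDegree_le hp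

lemma abs_evalP_homogeneousComponent_sub_le {n d : ℕ} (g g' : MvPolynomial (Fin n) ℝ)
    {v : En n} (hv : ‖v‖ ≤ 1) :
    |evalP (homogeneousComponent d g') v - evalP (homogeneousComponent d g) v| ≤
      ((d + 1) ^ n : ℕ) * l2Norm (g' - g) := by
  have hsub : evalP (homogeneousComponent d g') v - evalP (homogeneousComponent d g) v =
      evalP (homogeneousComponent d (g' - g)) v := by
    simp only [evalP, map_sub]
  rw [hsub]
  exact (abs_evalP_le_of_totalDegree_le
    (homogeneousComponent_isHomogeneous d _).totalDegree_le hv).trans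
    (by gcongr; exact l2Norm_homogeneousComponent_le d _)

lemma exists_forall_l2Norm_sub_lt_totalDegree_le {n : ℕ} (g : MvPolynomial (Fin n) ℝ) :
    ∃ ε > 0, ∀ g', l2Norm (g' - g) < ε → g.totalDegree ≤ g'.totalDegree := by
  rcases eq_or_ne g 0 with rfl | hg
  · exact ⟨1, one_pos, fun _ _ => by simp⟩
  obtain ⟨m, hm, hdeg⟩ := Finset.exists_mem_eq_sup g.support (support_nonempty.mpr hg)
    fun m => m.sum fun _ e => e
  refine ⟨|coeff m g|, abs_pos.mpr (mem_support_iff.mp hm), fun g' hg' => ?_⟩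
  have hm' : coeff m g' ≠ 0 := fun h => by
    have := abs_coeff_le_l2Norm (g' - g) m
    rw [coeff_sub, h, zero_sub, abs_neg] at this
    linarith
  rw [totalDegree, hdeg]
  exact le_totalDegree (mem_support_iff.mpr hm')

lemma smul_mem_asympCone {n : ℕ} {K : Set (En n)} {v : En n} (hv : v ∈ asympCone K)
    {c : ℝ} (hc : 0 < c) : c • v ∈ asympCone K := by
  obtain ⟨t, x, hx, ht, hlim⟩ := hv
  refine ⟨fun k => t k / c, x, hx, ht.atTop_div_const hc, ?_⟩
  have hscale : (fun k => (t k / c)⁻¹ • x k) = fun k => c • ((t k)⁻¹ • x k) := by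
    funext k
    rw [div_eq_mul_inv, mul_inv, inv_inv, mul_comm, mul_smul]
  rw [hscale]
  exact hlim.const_smul c

lemma isClosed_asympCone {n : ℕ} (K : Set (En n)) : IsClosed (asympCone K) := by
  refine IsSeqClosed.isClosed fun u v hu huv => ?_
  -- diagonal argument: for each `j` pick one term of a sequence witnessing `u j ∈ K∞`
  have hdiag : ∀ j : ℕ, ∃ (s : ℝ) (y : En n), y ∈ K ∧ (j : ℝ) + 1 ≤ s ∧
      dist (s⁻¹ • y) (u j) < 1 / ((j : ℝ) + 1) := fun j => by
    obtain ⟨t, x, hx, ht, hlim⟩ := hu j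
    obtain ⟨k, hk1, hk2⟩ := ((ht.eventually_ge_atTop ((j : ℝ) + 1)).and
      (Metric.tendsto_nhds.mp hlim _ Nat.one_div_pos_of_nat)).exists
    exact ⟨t k, x k, hx k, hk1, hk2⟩
  choose s y hy hs hdist using hdiag
  refine ⟨s, y, hy, tendsto_atTop_mono hs
    (tendsto_atTop_add_const_right _ 1 tendsto_natCast_atTop_atTop), ?_⟩
  rw [tendsto_iff_dist_tendsto_zero]
  refine squeeze_zero (fun j => dist_nonneg) (fun j => (dist_triangle _ (u j) v).trans
    (add_le_add_left (hdist j).le _)) ?_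
  simpa using tendsto_one_div_add_atTop_nhds_zero_nat.add
    (tendsto_iff_dist_tendsto_zero.mp huv)

def IsPosHomogeneous {E : Type*} [SMul ℝ E] (f : E → ℝ) (d : ℕ) : Prop :=
  ∀ c : ℝ, 0 < c → ∀ v, f (c • v) = c ^ d * f v

namespace IsPosHomogeneous

variable {E : Type*} [NormedAddCommGroup E] [NormedSpace ℝ E] {f : E → ℝ} {d : ℕ}

lemma map_zero (hf : IsPosHomogeneous f d) (hd : 0 < d) : f 0 = 0 := by
  have h2 := hf 2 two_pos 0
  rw [smul_zero] at h2
  have hpow : (1 : ℝ) < 2 ^ d := one_lt_pow₀ one_lt_two hd.ne'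
  nlinarith

lemma apply_eq_norm_pow_mul (hf : IsPosHomogeneous f d) {x : E} (hx : x ≠ 0) :
    f x = ‖x‖ ^ d * f (‖x‖⁻¹ • x) := by
  rw [← hf _ (norm_pos_iff.mpr hx), smul_inv_smul₀ (norm_ne_zero_iff.mpr hx)]

end IsPosHomogeneous

lemma isPosHomogeneous_evalP_homogeneousComponent {n : ℕ} (d : ℕ) (g : MvPolynomial (Fin n) ℝ) :
    IsPosHomogeneous (evalP (homogeneousComponent d g)) d :=
  fun c _ _ => (homogeneousComponent_isHomogeneous d g).eval_smul c _

section PosHomogeneousOnCone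

variable {n d : ℕ} {C : Set (En n)} {f : En n → ℝ}

lemma inv_norm_smul_mem_inter_sphere (hC : ∀ v ∈ C, ∀ c : ℝ, 0 < c → c • v ∈ C) {x : En n}
    (hx : x ∈ C) (hx0 : x ≠ 0) : ‖x‖⁻¹ • x ∈ C ∩ Metric.sphere 0 1 :=
  ⟨hC x hx _ (inv_pos.mpr (norm_pos_iff.mpr hx0)),
    mem_sphere_zero_iff_norm.mpr (norm_smul_inv_norm hx0)⟩

lemma solSet_eq_empty_of_neg (hd : 0 < d) (hC : ∀ v ∈ C, ∀ c : ℝ, 0 < c → c • v ∈ C)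
    (hf : IsPosHomogeneous f d) {v : En n} (hv : v ∈ C) (hfv : f v < 0) : solSet C f = ∅ := by
  refine Set.eq_empty_iff_forall_notMem.mpr fun x ⟨_, hmin⟩ => ?_
  set c := max 1 (f x / f v + 1)
  have hc : 1 ≤ c := le_max_left _ _
  have h1 : f x ≤ c ^ d * f v := hf c (by linarith) v ▸ hmin _ (hC v hv c (by linarith))
  have h2 : c ^ d * f v ≤ c * f v := mul_le_mul_of_nonpos_right (le_self_pow₀ hc hd.ne') hfv.le
  have h3 : c * f v < f x :=
    (div_lt_iff_of_neg hfv).mp ((lt_add_one _).trans_le (le_max_right _ _))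
  linarith

lemma solSet_subset_zero_of_pos (hd : 0 < d) (hC : ∀ v ∈ C, ∀ c : ℝ, 0 < c → c • v ∈ C)
    (hf : IsPosHomogeneous f d) (hpos : ∀ v ∈ C ∩ Metric.sphere 0 1, 0 < f v) :
    solSet C f ⊆ {0} := by
  rintro x ⟨hx, hmin⟩
  by_contra hx0
  have hfx : 0 < f x := by
    rw [hf.apply_eq_norm_pow_mul hx0]
    exact mul_pos (pow_pos (norm_pos_iff.mpr hx0) d)
      (hpos _ (inv_norm_smul_mem_inter_sphere hC hx hx0))
  -- halving `x` would strictly decrease `f`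
  have hhalf := hmin _ (hC x hx (1 / 2) (by norm_num))
  rw [hf _ (by norm_num)] at hhalf
  have hpow : (1 / 2 : ℝ) ^ d < 1 := pow_lt_one₀ (by norm_num) (by norm_num) hd.ne'
  nlinarith

lemma not_isBounded_solSet_of_eq_zero (hC : ∀ v ∈ C, ∀ c : ℝ, 0 < c → c • v ∈ C)
    (hf : IsPosHomogeneous f d) (hnonneg : ∀ y ∈ C, 0 ≤ f y) {v : En n} (hv : v ∈ C)
    (hv0 : v ≠ 0) (hfv : f v = 0) : ¬ IsBounded (solSet C f) := by
  intro hb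
  obtain ⟨R, hR⟩ := isBounded_iff_forall_norm_le.mp hb
  have hc : 0 < (|R| + 1) / ‖v‖ := by positivity
  have hmem : ((|R| + 1) / ‖v‖) • v ∈ solSet C f :=
    ⟨hC v hv _ hc, fun y hy => by rw [hf _ hc, hfv, mul_zero]; exact hnonneg y hy⟩
  have hnorm := hR _ hmem
  rw [norm_smul, Real.norm_of_nonneg hc.le, div_mul_cancel₀ _ (norm_ne_zero_iff.mpr hv0)] at hnorm
  linarith [le_abs_self R]

lemma isBounded_solSet_iff (hd : 0 < d) (hC : ∀ v ∈ C, ∀ c : ℝ, 0 < c → c • v ∈ C)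
    (hf : IsPosHomogeneous f d) :
    IsBounded (solSet C f) ↔
      (∃ v ∈ C ∩ Metric.sphere 0 1, f v < 0) ∨ ∀ v ∈ C ∩ Metric.sphere 0 1, 0 < f v := by
  refine ⟨fun hb => ?_, ?_⟩
  · by_contra! h
    obtain ⟨hnonneg, v, hv, hfv⟩ := h
    refine not_isBounded_solSet_of_eq_zero hC hf (fun y hy => ?_) hv.1
      (Metric.ne_of_mem_sphere hv.2 one_ne_zero) (le_antisymm hfv (hnonneg v hv)) hb
    rcases eq_or_ne y 0 with rfl | hy0
    · exact (hf.map_zero hd).ge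
    · rw [hf.apply_eq_norm_pow_mul hy0]
      exact mul_nonneg (by positivity) (hnonneg _ (inv_norm_smul_mem_inter_sphere hC hy hy0))
  · rintro (⟨v, hv, hfv⟩ | hpos)
    · rw [solSet_eq_empty_of_neg hd hC hf hv.1 hfv]
      exact isBounded_empty
    · exact isBounded_singleton.subset (solSet_subset_zero_of_pos hd hC hf hpos)

end PosHomogeneousOnCone

lemma IsCompact.exists_neg_or_forall_pos_stable {X : Type*} [TopologicalSpace X] {S : Set X}
    (hS : IsCompact S) {f : X → ℝ} (hf : ContinuousOn f S)
    (h : (∃ v ∈ S, f v < 0) ∨ ∀ v ∈ S, 0 < f v) :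
    ∃ δ > 0, ∀ f' : X → ℝ, (∀ v ∈ S, |f' v - f v| < δ) →
      (∃ v ∈ S, f' v < 0) ∨ ∀ v ∈ S, 0 < f' v := by
  rcases h with ⟨v, hv, hfv⟩ | hpos
  · refine ⟨-f v, neg_pos.mpr hfv, fun f' hf' => Or.inl ⟨v, hv, ?_⟩⟩
    linarith [le_abs_self (f' v - f v), hf' v hv]
  · obtain ⟨δ, hδ, hδS⟩ := hS.exists_forall_le' hf hpos
    refine ⟨δ, hδ, fun f' hf' => Or.inr fun v hv => ?_⟩
    linarith [neg_abs_le (f' v - f v), hf' v hv, hδS v hv]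

theorem stmt8_general {n d : ℕ} (hd : 1 ≤ d) (K : Set (En n)) :
    ∀ g : MvPolynomial (Fin n) ℝ, g.totalDegree = d →
      IsBounded (solSet (asympCone K) (evalP (homogeneousComponent d g))) →
      ∃ ε > 0, ∀ g' : MvPolynomial (Fin n) ℝ, g'.totalDegree ≤ d → l2Norm (g' - g) < ε →
        g'.totalDegree = d ∧
        IsBounded (solSet (asympCone K) (evalP (homogeneousComponent d g'))) := by
  intro g hg hbd
  have hC : ∀ v ∈ asympCone K, ∀ c : ℝ, 0 < c → c • v ∈ asympCone K :=
    fun _ hv _ hc => smul_mem_asympCone hv hc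
  have hS : IsCompact (asympCone K ∩ Metric.sphere 0 1) :=
    (isCompact_sphere 0 1).inter_left (isClosed_asympCone K)
  obtain ⟨δ, hδ, hstable⟩ := hS.exists_neg_or_forall_pos_stable
    (continuous_evalP _).continuousOn
    ((isBounded_solSet_iff hd hC (isPosHomogeneous_evalP_homogeneousComponent d g)).mp hbd)
  obtain ⟨ε, hε, hdeg⟩ := exists_forall_l2Norm_sub_lt_totalDegree_le g
  have hN : (0 : ℝ) < ((d + 1) ^ n : ℕ) := by positivity
  refine ⟨min ε (δ / ((d + 1) ^ n : ℕ)), by positivity, fun g' hle hl2 =>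
    ⟨le_antisymm hle (hg ▸ hdeg g' (hl2.trans_le (min_le_left _ _))), ?_⟩⟩
  rw [isBounded_solSet_iff hd hC (isPosHomogeneous_evalP_homogeneousComponent d g')]
  refine hstable _ fun v hv => ?_
  calc _ ≤ ((d + 1) ^ n : ℕ) * l2Norm (g' - g) :=
        abs_evalP_homogeneousComponent_sub_le g g' (mem_sphere_zero_iff_norm.mp hv.2).le
    _ < δ := (lt_div_iff₀' hN).mp (hl2.trans_le (min_le_right _ _))

/-- The set `R_K` of polynomials `g` of degree exactly `d` such that `Sol(K∞, g_d)` is bounded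
is open in the space `P_d` of polynomials of degree at most `d` (with the `ℓ2` coefficient
metric). -/
theorem stmt8 {n d : ℕ} (hd : 1 ≤ d) (K : Set (En n)) (hKne : K.Nonempty) (hKcl : IsClosed K) :
    ∀ g : MvPolynomial (Fin n) ℝ, g.totalDegree = d →
      IsBounded (solSet (asympCone K) (evalP (homogeneousComponent d g))) →
      ∃ ε > 0, ∀ g' : MvPolynomial (Fin n) ℝ, g'.totalDegree ≤ d → l2Norm (g' - g) < ε →
        g'.totalDegree = d ∧
        IsBounded (solSet (asympCone K) (evalP (homogeneousComponent d g'))) :=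
  stmt8_general hd K

end
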